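/- arXiv:1412.5413 — 2 statements merged into one kernel-verified Lean document; each statement's English description precedes it below -/
import Mathlib

section
/- If k is a real number such that a³ + b³ + c³ + d³ + 1 ≥ k·(a + b + c + d) holds for all real numbers a, b, c, d each ≥ −1, then k = 3/4. Equivalently, k = 3/4 is the unique real number for which this inequality holds for all such a, b, c, d. -/
/-! Since x³ - (3/4)x + 1/4 = (x + 1)(x - 1/2)², the tangent line of x³ at 1/2 lies below the cubic
on [-1, ∞); summing over a, b, c, d proves the inequality for k = 3/4. Conversely,
a = b = c = d = 1/2 forces k ≤ 3/4 and a = b = c = d = -1 forces k ≥ 3/4. -/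

lemma tangent_le_cube_of_neg_one_le {x : ℝ} (hx : -1 ≤ x) : 3 / 4 * x - 1 / 4 ≤ x ^ 3 := by
  linear_combination mul_nonneg (by linarith : (0 : ℝ) ≤ x + 1) (sq_nonneg (x - 1 / 2))

theorem stmt_3 (k : ℝ) :
    (∀ a b c d : ℝ, -1 ≤ a → -1 ≤ b → -1 ≤ c → -1 ≤ d →
      a ^ 3 + b ^ 3 + c ^ 3 + d ^ 3 + 1 ≥ k * (a + b + c + d)) ↔ k = 3 / 4 := by
  constructor
  · intro h
    have at_half := h (1 / 2) (1 / 2) (1 / 2) (1 / 2) (by norm_num) (by norm_num) (by norm_num)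
      (by norm_num)
    have at_neg_one := h (-1) (-1) (-1) (-1) le_rfl le_rfl le_rfl le_rfl
    norm_num at at_half at_neg_one
    linarith
  · rintro rfl a b c d ha hb hc hd
    linarith [tangent_le_cube_of_neg_one_le ha, tangent_le_cube_of_neg_one_le hb,
      tangent_le_cube_of_neg_one_le hc, tangent_le_cube_of_neg_one_le hd]
end

section
/- The infimum over all positive real numbers a, b, c of 3a/(b+c) + 4b/(c+a) + 5c/(a+b) equals (√3 + 2 + √5)²/2 − 12, and this value is attained (e.g. at a = 2 + √5 − √3, b = √3 − 2 + √5, c = √3 + 2 − √5). -/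
/-!
Put `x = b + c`, `y = c + a`, `z = a + b`. Then `2a = y + z - x` etc., so the expression
`p a/(b+c) + q b/(c+a) + r c/(a+b)` becomes half the sum of the three pairs
`p y/x + q x/y`, `p z/x + r x/z`, `q z/y + r y/z`, minus `(p+q+r)/2`. By AM-GM these pairs are at
least `2√(pq)`, `2√(pr)`, `2√(qr)`, giving the bound `(√p + √q + √r)²/2 - (p+q+r)`, with equality
when `x : y : z = √p : √q : √r`. For `(p, q, r) = (3, 4, 5)` the square roots satisfy the triangle
inequality, so the corresponding `a, b, c` are positive.
-/

open Real

lemma two_sqrt_mul_sqrt_le_mul_div_add_mul_div {p q x y : ℝ} (hp : 0 ≤ p) (hq : 0 ≤ q)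
    (hx : 0 < x) (hy : 0 < y) : 2 * √p * √q ≤ p * y / x + q * x / y := by
  have h := sq_nonneg (√p * y - √q * x)
  rw [sub_sq, mul_pow, mul_pow, sq_sqrt hp, sq_sqrt hq] at h
  rw [div_add_div _ _ hx.ne' hy.ne', le_div_iff₀ (by positivity)]
  linarith

lemma weighted_div_add_eq (p q r : ℝ) {a b c : ℝ} (ha : 0 < a) (hb : 0 < b) (hc : 0 < c) :
    p * a / (b + c) + q * b / (c + a) + r * c / (a + b) =
      ((p * (c + a) / (b + c) + q * (b + c) / (c + a)) +
        (p * (a + b) / (b + c) + r * (b + c) / (a + b)) +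
        (q * (a + b) / (c + a) + r * (c + a) / (a + b))) / 2 - (p + q + r) / 2 := by
  field_simp
  ring

theorem weighted_nesbitt {p q r a b c : ℝ} (hp : 0 ≤ p) (hq : 0 ≤ q) (hr : 0 ≤ r)
    (ha : 0 < a) (hb : 0 < b) (hc : 0 < c) :
    (√p + √q + √r) ^ 2 / 2 - (p + q + r) ≤
      p * a / (b + c) + q * b / (c + a) + r * c / (a + b) := by
  have hpq := two_sqrt_mul_sqrt_le_mul_div_add_mul_div hp hq (add_pos hb hc) (add_pos hc ha)
  have hpr := two_sqrt_mul_sqrt_le_mul_div_add_mul_div hp hr (add_pos hb hc) (add_pos ha hb)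
  have hqr := two_sqrt_mul_sqrt_le_mul_div_add_mul_div hq hr (add_pos hc ha) (add_pos ha hb)
  rw [weighted_div_add_eq p q r ha hb hc]
  nlinarith [sq_sqrt hp, sq_sqrt hq, sq_sqrt hr]

theorem weighted_nesbitt_eq {p q r a b c : ℝ} (hp : 0 < p) (hq : 0 < q) (hr : 0 < r)
    (ha : a = √q + √r - √p) (hb : b = √r + √p - √q) (hc : c = √p + √q - √r) :
    p * a / (b + c) + q * b / (c + a) + r * c / (a + b) =
      (√p + √q + √r) ^ 2 / 2 - (p + q + r) := by
  obtain ⟨s, hs, rfl⟩ : ∃ s > 0, s ^ 2 = p := ⟨√p, sqrt_pos.2 hp, sq_sqrt hp.le⟩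
  obtain ⟨t, ht, rfl⟩ : ∃ t > 0, t ^ 2 = q := ⟨√q, sqrt_pos.2 hq, sq_sqrt hq.le⟩
  obtain ⟨u, hu, rfl⟩ : ∃ u > 0, u ^ 2 = r := ⟨√r, sqrt_pos.2 hr, sq_sqrt hr.le⟩
  simp only [sqrt_sq hs.le, sqrt_sq ht.le, sqrt_sq hu.le] at ha hb hc ⊢
  have hbc : b + c = 2 * s := by rw [hb, hc]; ring
  have hca : c + a = 2 * t := by rw [hc, ha]; ring
  have hab : a + b = 2 * u := by rw [ha, hb]; ring
  rw [hbc, hca, hab, ha, hb, hc]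
  field_simp
  ring

theorem stmt_12 :
    IsLeast
      {y : ℝ | ∃ a b c : ℝ, 0 < a ∧ 0 < b ∧ 0 < c ∧
        y = 3 * a / (b + c) + 4 * b / (c + a) + 5 * c / (a + b)}
      ((Real.sqrt 3 + 2 + Real.sqrt 5) ^ 2 / 2 - 12) := by
  have h4 : √4 = 2 := by rw [show (4 : ℝ) = 2 ^ 2 by norm_num, sqrt_sq zero_le_two]
  have h3 : √3 < 2 := by rw [← h4]; exact sqrt_lt_sqrt (by norm_num) (by norm_num)
  have h5 : 2 < √5 := by rw [← h4]; exact sqrt_lt_sqrt (by norm_num) (by norm_num)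
  have h35 : √5 < √3 + 2 := by
    rw [sqrt_lt' (by positivity)]
    nlinarith [sq_sqrt (show (0 : ℝ) ≤ 3 by norm_num), sqrt_nonneg 3]
  have hmin : (√3 + 2 + √5) ^ 2 / 2 - 12 = (√3 + √4 + √5) ^ 2 / 2 - (3 + 4 + 5) := by
    rw [h4]; norm_num
  rw [hmin]
  refine ⟨⟨2 + √5 - √3, √3 - 2 + √5, √3 + 2 - √5, by linarith, by linarith, by linarith, ?_⟩, ?_⟩
  · exact (weighted_nesbitt_eq (by norm_num) (by norm_num) (by norm_num)
      (by linarith) (by linarith) (by linarith)).symm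
  · rintro y ⟨a, b, c, ha, hb, hc, rfl⟩
    exact weighted_nesbitt (by norm_num) (by norm_num) (by norm_num) ha hb hc
end
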